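/- Replaceability for the PN(k,p,q) upper bounds: let p ∈ {k+1,…,n}, q ∈ {1,…,n}, and let v : {1,…,k} → {1,…,n} be an arbitrary assignment of target outcome values. Then: (i) P(⋂_{j=1}^{k} {Y_j = v(j)} ∩ {X = p} ∩ {Y = q}) ≤ P(X = p, Y = q); and (ii) for every j ∈ {1,…,k}, P(⋂_{j=1}^{k} {Y_j = v(j)} ∩ {X = p} ∩ {Y = q}) ≤ P(Y_j = v(j)) − P(X = j, Y = v(j)). -/

import Mathlib

/-! On the event of (ii), `X = p` with `p > k ≥ j`, so it is disjoint from `{X = j, Y = v j}`; by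
consistency the latter is `{X = j} ∩ {Y_j = v j}`, hence both events lie inside `{Y_j = v j}`, and
additivity of `P` gives the bound. Bound (i) is monotonicity. -/

open MeasureTheory Set

theorem measureReal_le_sub_of_disjoint {α : Type*} [MeasurableSpace α] {μ : Measure α}
    [IsFiniteMeasure μ] {s t u : Set α} (ht : MeasurableSet t) (hst : Disjoint s t)
    (hsu : s ⊆ u) (htu : t ⊆ u) :
    μ.real s ≤ μ.real u - μ.real t := by
  have h_union : μ.real (s ∪ t) = μ.real s + μ.real t := measureReal_union hst ht
  have h_mono : μ.real (s ∪ t) ≤ μ.real u := measureReal_mono (union_subset hsu htu)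
  linarith

theorem setOf_treatment_and_observed_eq {Ω ι β : Type*} {X : Ω → ι} {Y : ι → Ω → β}
    {Yobs : Ω → β} (hcons : ∀ ω, Yobs ω = Y (X ω) ω) (j : ι) (b : β) :
    {ω | X ω = j ∧ Yobs ω = b} = {ω | X ω = j} ∩ {ω | Y j ω = b} := by
  ext ω
  simp only [mem_ofPred_eq, mem_inter_iff, hcons]
  constructor <;> rintro ⟨rfl, h⟩ <;> exact ⟨rfl, h⟩

theorem pn_kpq_upper_bounds_replaceability_general
    {Ω : Type*} [MeasurableSpace Ω] (P : Measure Ω) [IsProbabilityMeasure P]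
    (n k : ℕ)
    (X : Ω → ℕ) (Y : ℕ → Ω → ℕ) (Yobs : Ω → ℕ)
    (hX : Measurable X) (hY : ∀ j, Measurable (Y j))
    (hcons : ∀ ω, Yobs ω = Y (X ω) ω)
    (p : ℕ) (hp : p ∈ Finset.Icc (k+1) n)
    (q : ℕ)
    (v : ℕ → ℕ) :
    (P ((⋂ j ∈ Finset.Icc 1 k, {ω | Y j ω = v j}) ∩ {ω | X ω = p} ∩ {ω | Yobs ω = q})).toReal ≤ (P {ω | X ω = p ∧ Yobs ω = q}).toReal ∧
    ∀ j ∈ Finset.Icc 1 k, (P ((⋂ j ∈ Finset.Icc 1 k, {ω | Y j ω = v j}) ∩ {ω | X ω = p} ∩ {ω | Yobs ω = q})).toReal ≤ (P {ω | Y j ω = v j}).toReal - (P {ω | X ω = j ∧ Yobs ω = v j}).toReal := by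
  refine ⟨measureReal_mono fun ω hω ↦ ⟨hω.1.2, hω.2⟩, fun j hj ↦ ?_⟩
  have hjp : j ≠ p := by
    have := (Finset.mem_Icc.mp hp).1
    have := (Finset.mem_Icc.mp hj).2
    omega
  rw [setOf_treatment_and_observed_eq hcons]
  refine measureReal_le_sub_of_disjoint
    ((hX (measurableSet_singleton j)).inter (hY j (measurableSet_singleton (v j))))
    ?_ (fun ω hω ↦ mem_iInter₂.mp hω.1.1 j hj) inter_subset_right
  exact disjoint_left.mpr fun ω hA hB ↦ hjp (hB.1.symm.trans hA.1.2)

theorem pn_kpq_upper_bounds_replaceability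
    {Ω : Type*} [MeasurableSpace Ω] (P : Measure Ω) [IsProbabilityMeasure P]
    (n k : ℕ) (hk1 : 1 ≤ k) (hkn : k ≤ n)
    (X : Ω → ℕ) (Y : ℕ → Ω → ℕ) (Yobs : Ω → ℕ)
    (hX : Measurable X) (hY : ∀ j, Measurable (Y j))
    (hXr : ∀ ω, X ω ∈ Finset.Icc 1 n)
    (hYr : ∀ j ω, Y j ω ∈ Finset.Icc 1 n)
    (hcons : ∀ ω, Yobs ω = Y (X ω) ω)
    (p : ℕ) (hp : p ∈ Finset.Icc (k+1) n)
    (q : ℕ) (hq : q ∈ Finset.Icc 1 n)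
    (v : ℕ → ℕ) (hv : ∀ j ∈ Finset.Icc 1 k, v j ∈ Finset.Icc 1 n) :
    (P ((⋂ j ∈ Finset.Icc 1 k, {ω | Y j ω = v j}) ∩ {ω | X ω = p} ∩ {ω | Yobs ω = q})).toReal ≤ (P {ω | X ω = p ∧ Yobs ω = q}).toReal ∧
    ∀ j ∈ Finset.Icc 1 k, (P ((⋂ j ∈ Finset.Icc 1 k, {ω | Y j ω = v j}) ∩ {ω | X ω = p} ∩ {ω | Yobs ω = q})).toReal ≤ (P {ω | Y j ω = v j}).toReal - (P {ω | X ω = j ∧ Yobs ω = v j}).toReal :=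
  pn_kpq_upper_bounds_replaceability_general P n k X Y Yobs hX hY hcons p hp q v
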